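/- arXiv:0707.2056 — 3 statements merged into one kernel-verified Lean document; each statement's English description precedes it below -/
import Mathlib

section
/- For every function f : ℂ^{n+1} → ℝ of class C² and for every j = 1,…,n, the following pointwise identity holds: Σ_{ℓ,k=1}^{n+1} (∂σ_{j+1}/∂a_{ℓk̄})(∂∂̄f) · f_ℓ · f_{k̄} = − Σ_{1≤i_1<…<i_{j+1}≤n+1} Δ_{(i_1,…,i_{j+1})}(f). -/
/-!
Write `A = ∂∂̄f`, `u = (f_ℓ)` and `v = (f_{k̄})`; the identity is linear algebra in these.
Each principal minor `det A_s` is affine in a single entry `a_{ℓk̄}`, with slope the cofactor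
`adj(A_s)_{kℓ}`, so the left side equals `Σ_s Σ_{p,q ∈ s} adj(A_s)_{qp} u_p v_q`. A bordered
determinant `det [[0, vᵀ], [u, M]]` equals `det (M - u vᵀ) - det M` by a Schur complement;
being bilinear in the border, it is therefore `-vᵀ adj(M) u`, as computed on basis vectors.
-/

open MeasureTheory Finset Complex ENNReal

noncomputable section

/-- `ℂ^{n+1}` with the Euclidean metric. -/
abbrev Cspace (n : ℕ) := EuclideanSpace ℂ (Fin (n + 1))


/-- Real inner product structure on `ℂ^{n+1}` (restriction of scalars). -/
instance {n : ℕ} : InnerProductSpace ℝ (Cspace n) := InnerProductSpace.rclikeToReal ℂ _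

instance {n : ℕ} : MeasurableSpace (Cspace n) := borel _

instance {n : ℕ} : BorelSpace (Cspace n) := ⟨rfl⟩

/-- Wirtinger derivative `∂g/∂z_j` of a complex valued function. -/
def zder {n : ℕ} (g : Cspace n → ℂ) (j : Fin (n + 1)) (z : Cspace n) : ℂ :=
  (fderiv ℝ g z (EuclideanSpace.single j 1) -
    Complex.I * fderiv ℝ g z (EuclideanSpace.single j Complex.I)) / 2

/-- Wirtinger derivative `∂g/∂z̄_j` of a complex valued function. -/
def zbar {n : ℕ} (g : Cspace n → ℂ) (j : Fin (n + 1)) (z : Cspace n) : ℂ :=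
  (fderiv ℝ g z (EuclideanSpace.single j 1) +
    Complex.I * fderiv ℝ g z (EuclideanSpace.single j Complex.I)) / 2

/-- `f_j = ∂f/∂z_j` for a real valued function. -/
def pder {n : ℕ} (f : Cspace n → ℝ) (j : Fin (n + 1)) (z : Cspace n) : ℂ :=
  zder (fun w => (f w : ℂ)) j z

/-- `|∂f| = (Σ_j |f_j|²)^{1/2}`. -/
def pnorm {n : ℕ} (f : Cspace n → ℝ) (z : Cspace n) : ℝ :=
  Real.sqrt (∑ j, ‖pder f j z‖ ^ 2)

/-- The complex Hessian matrix `(f_{l k̄})`. -/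
def hess {n : ℕ} (f : Cspace n → ℝ) (z : Cspace n) :
    Matrix (Fin (n + 1)) (Fin (n + 1)) ℂ :=
  Matrix.of fun l k => zder (fun w => zbar (fun u => (f u : ℂ)) k w) l z

/-- The bordered determinant `Δ_{(i_1,…,i_m)}(f)` for `s = {i_1 < … < i_m}`. -/
def borderedDet {n : ℕ} (f : Cspace n → ℝ) (s : Finset (Fin (n + 1))) (z : Cspace n) : ℂ :=
  Matrix.det (Matrix.of fun p q : Option {i // i ∈ s} =>
    match p, q with
    | none, none => 0
    | none, some q => starRingEnd ℂ (pder f q.1 z)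
    | some p, none => pder f p.1 z
    | some p, some q => hess f z p.1 q.1)

/-- `σ_m(A)`: the `m`-th elementary symmetric function of the eigenvalues of a
Hermitian matrix, expressed as the sum of all principal `m × m` minors. -/
def esymm {n : ℕ} (m : ℕ) (A : Matrix (Fin (n + 1)) (Fin (n + 1)) ℂ) : ℂ :=
  ∑ s ∈ Finset.univ.powersetCard m,
    Matrix.det (Matrix.of fun p q : {i // i ∈ s} => A p.1 q.1)

/-- `∂σ_m/∂a_{l k̄}(A)`: partial derivative of `σ_m` as a polynomial in the entries. -/
def esymmDeriv {n : ℕ} (m : ℕ) (l k : Fin (n + 1))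
    (A : Matrix (Fin (n + 1)) (Fin (n + 1)) ℂ) : ℂ :=
  deriv (fun t : ℂ => esymm m (A + t • Matrix.single l k 1)) 0

/-- The `j`-th Levi curvature of `{f = 0}` computed from the defining function `f`. -/
def leviK (n j : ℕ) (f : Cspace n → ℝ) (z : Cspace n) : ℝ :=
  -((n.choose j : ℝ))⁻¹ * ((pnorm f z) ^ (j + 2))⁻¹ *
    (∑ s ∈ Finset.univ.powersetCard (j + 1), borderedDet f s z).re

/-- The real gradient `∇f`, written in complex coordinates. -/
def gradC {n : ℕ} (f : Cspace n → ℝ) (z : Cspace n) : Cspace n :=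
  (WithLp.equiv 2 (Fin (n + 1) → ℂ)).symm fun k =>
    (fderiv ℝ f z (EuclideanSpace.single k 1) : ℂ) +
      (fderiv ℝ f z (EuclideanSpace.single k Complex.I) : ℝ) * Complex.I

/-- The divergence of a vector field on `ℂ^{n+1} ≅ ℝ^{2n+2}`. -/
def divC {n : ℕ} (V : Cspace n → Cspace n) (z : Cspace n) : ℝ :=
  ∑ k, ((fderiv ℝ V z (EuclideanSpace.single k 1) k).re +
        (fderiv ℝ V z (EuclideanSpace.single k Complex.I) k).im)

/-- The Euclidean mean curvature `H = (1/(2n+1)) div(∇f/|∇f|)` of `{f = 0}`. -/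
def meanCurvC (n : ℕ) (f : Cspace n → ℝ) (z : Cspace n) : ℝ :=
  (2 * n + 1 : ℝ)⁻¹ * divC (fun w => ‖gradC f w‖⁻¹ • gradC f w) z


namespace Matrix

variable {ι R : Type*} [CommRing R]

def bordered (M : Matrix ι ι R) (u v : ι → R) : Matrix (Option ι) (Option ι) R :=
  of fun r c => match r, c with
    | none, none => 0
    | none, some q => v q
    | some p, none => u p
    | some p, some q => M p q

theorem bordered_transpose (M : Matrix ι ι R) (u v : ι → R) :
    (bordered M u v)ᵀ = bordered Mᵀ v u := by
  ext (_ | _) (_ | _) <;> rfl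

variable [DecidableEq ι]

theorem submatrix_val_add_smul_single (A : Matrix ι ι R) (s : Finset ι) {l k : ι}
    (hl : l ∈ s) (hk : k ∈ s) (t : R) :
    (A + t • single l k 1).submatrix (Subtype.val : s → ι) (Subtype.val : s → ι) =
      A.submatrix Subtype.val Subtype.val + t • single ⟨l, hl⟩ ⟨k, hk⟩ 1 := by
  ext p q
  simp [single_apply, ← Subtype.val_inj]

theorem submatrix_val_add_smul_single_of_notMem (A : Matrix ι ι R) (s : Finset ι) {l k : ι}
    (h : ¬(l ∈ s ∧ k ∈ s)) (t : R) :
    (A + t • single l k 1).submatrix (Subtype.val : s → ι) (Subtype.val : s → ι) =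
      A.submatrix Subtype.val Subtype.val := by
  ext p q
  have : ¬(l = p ∧ k = q) := fun ⟨hp, hq⟩ => h ⟨hp ▸ p.2, hq ▸ q.2⟩
  simp [this]

variable [Fintype ι]

theorem det_updateRow_sum_smul {κ : Type*} [Fintype κ] (M : Matrix ι ι R) (i : ι)
    (c : κ → R) (w : κ → ι → R) :
    (M.updateRow i (∑ a, c a • w a)).det = ∑ a, c a * (M.updateRow i (w a)).det := by
  have h : ∀ x, (M.updateRow i x).det = detRowAlternating.toMultilinearMap.toLinearMap M i x :=
    fun _ => rfl
  simp only [h, map_sum, map_smul, smul_eq_mul]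

theorem det_add_smul_single (M : Matrix ι ι R) (p q : ι) (t : R) :
    (M + t • single p q 1).det = M.det + t * adjugate M q p := by
  have hrow : M + t • single p q 1 = M.updateRow p (M p + t • Pi.single q 1) := by
    ext i j
    by_cases hi : i = p
    · subst hi; simp [single_apply, Pi.single_apply, eq_comm]
    · simp [hi, Ne.symm hi]
  rw [hrow, det_updateRow_add, updateRow_eq_self, det_updateRow_smul, adjugate_apply]

theorem det_bordered_eq_det_sub_vecMulVec (M : Matrix ι ι R) (u v : ι → R) :
    (bordered M u v).det = (M - vecMulVec u v).det - M.det := by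
  let e := Equiv.optionEquivSumPUnit.{0} ι
  -- with `1` in the corner, the Schur complement of that corner is `M - u vᵀ`
  have hcorner : (bordered M u v).updateRow none (bordered M u v none + Pi.single none 1) =
      (fromBlocks M (replicateCol Unit u) (replicateRow Unit v) 1).submatrix e e := by
    ext (_ | _) (_ | _) <;> simp [e, bordered]
  have hunit : (bordered M u v).updateRow none (Pi.single none 1) =
      (fromBlocks M (replicateCol Unit u) 0 1).submatrix e e := by
    ext (_ | _) (_ | _) <;> simp [e, bordered]
  have := congrArg det hcorner
  rw [det_updateRow_add, updateRow_eq_self, hunit, det_submatrix_equiv_self,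
    det_submatrix_equiv_self, det_fromBlocks_zero₂₁, det_fromBlocks_one₂₂,
    ← vecMulVec_eq] at this
  simp only [det_one, mul_one] at this
  exact eq_sub_of_add_eq this

theorem det_bordered_single (M : Matrix ι ι R) (p q : ι) :
    (bordered M (Pi.single p 1) (Pi.single q 1)).det = -adjugate M q p := by
  have hrow : M - vecMulVec (Pi.single p 1) (Pi.single q 1) =
      M.updateRow p (M p + (-1 : R) • Pi.single q 1) := by
    ext i j
    by_cases hi : i = p
    · subst hi; simp [vecMulVec_apply, sub_eq_add_neg]
    · simp [vecMulVec_apply, hi]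
  rw [det_bordered_eq_det_sub_vecMulVec, hrow, det_updateRow_add, updateRow_eq_self,
    det_updateRow_smul, adjugate_apply]
  ring

theorem det_bordered_eq_sum_single_right (M : Matrix ι ι R) (u v : ι → R) :
    (bordered M u v).det = ∑ q, v q * (bordered M u (Pi.single q 1)).det := by
  have hrow : bordered M u v =
      (bordered M u 0).updateRow none (∑ q, v q • Pi.single (some q) 1) := by
    ext (_ | _) (_ | _) <;> simp [bordered, Finset.sum_apply, Pi.single_apply]
  have hsingle : ∀ q, bordered M u (Pi.single q 1) =
      (bordered M u 0).updateRow none (Pi.single (some q) 1) := by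
    intro q
    ext (_ | _) (_ | _) <;> simp [bordered, Pi.single_apply]
  simp only [hrow, det_updateRow_sum_smul, hsingle]

theorem det_bordered_eq_sum_single_left (M : Matrix ι ι R) (u v : ι → R) :
    (bordered M u v).det = ∑ p, u p * (bordered M (Pi.single p 1) v).det := by
  simp_rw [← det_transpose (bordered _ _ _), bordered_transpose]
  exact det_bordered_eq_sum_single_right Mᵀ v u

theorem det_bordered (M : Matrix ι ι R) (u v : ι → R) :
    (bordered M u v).det = -∑ p, ∑ q, adjugate M q p * u p * v q := by
  simp_rw [det_bordered_eq_sum_single_left M u, det_bordered_eq_sum_single_right _ _ v,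
    det_bordered_single, Finset.mul_sum, ← Finset.sum_neg_distrib]
  congr! 2 with p - q -
  ring

end Matrix

theorem Finset.sum_sum_dite_mem_mul {ι R : Type*} [Fintype ι] [DecidableEq ι] [CommSemiring R]
    (s : Finset ι) (B : s → s → R) (u v : ι → R) :
    ∑ l, ∑ k, (if h : l ∈ s ∧ k ∈ s then B ⟨l, h.1⟩ ⟨k, h.2⟩ else 0) * u l * v k =
      ∑ p : s, ∑ q : s, B p q * u p * v q := by
  have hsplit : ∀ l k, (if h : l ∈ s ∧ k ∈ s then B ⟨l, h.1⟩ ⟨k, h.2⟩ else 0) * u l * v k =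
      if hl : l ∈ s then (if hk : k ∈ s then B ⟨l, hl⟩ ⟨k, hk⟩ * u l * v k else 0) else 0 := by
    intro l k
    by_cases hl : l ∈ s <;> by_cases hk : k ∈ s <;> simp [hl, hk]
  simp only [hsplit, sum_dite_irrel, sum_const_zero, univ_eq_attach, sum_attach_eq_sum_dite]

open Matrix

section PrincipalMinors

variable {n : ℕ}

theorem esymm_add_smul_single (m : ℕ) (A : Matrix (Fin (n + 1)) (Fin (n + 1)) ℂ)
    (l k : Fin (n + 1)) (t : ℂ) :
    esymm m (A + t • single l k 1) = esymm m A + t * ∑ s ∈ univ.powersetCard m,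
      if h : l ∈ s ∧ k ∈ s then
        adjugate (A.submatrix Subtype.val Subtype.val) ⟨k, h.2⟩ ⟨l, h.1⟩ else 0 := by
  simp only [esymm, Finset.mul_sum, ← Finset.sum_add_distrib]
  refine Finset.sum_congr rfl fun s _ => ?_
  change ((A + t • single l k 1).submatrix (Subtype.val : s → _) Subtype.val).det =
    (A.submatrix Subtype.val Subtype.val).det + _
  split_ifs with h
  · rw [submatrix_val_add_smul_single A s h.1 h.2, det_add_smul_single]
  · rw [submatrix_val_add_smul_single_of_notMem A s h, mul_zero, add_zero]

theorem esymmDeriv_eq (m : ℕ) (l k : Fin (n + 1)) (A : Matrix (Fin (n + 1)) (Fin (n + 1)) ℂ) :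
    esymmDeriv m l k A = ∑ s ∈ univ.powersetCard m,
      if h : l ∈ s ∧ k ∈ s then
        adjugate (A.submatrix Subtype.val Subtype.val) ⟨k, h.2⟩ ⟨l, h.1⟩ else 0 := by
  unfold esymmDeriv
  simp_rw [esymm_add_smul_single]
  exact (((hasDerivAt_id 0).mul_const _).const_add _).deriv.trans (one_mul _)

theorem sum_esymmDeriv_mul_mul (m : ℕ) (A : Matrix (Fin (n + 1)) (Fin (n + 1)) ℂ)
    (u v : Fin (n + 1) → ℂ) :
    ∑ l, ∑ k, esymmDeriv m l k A * u l * v k = -∑ s ∈ univ.powersetCard m,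
      (bordered (A.submatrix (Subtype.val : s → _) Subtype.val) (fun p => u p)
        fun q => v q).det := by
  simp only [esymmDeriv_eq, Finset.sum_mul]
  rw [(Finset.sum_congr rfl fun l _ => Finset.sum_comm).trans Finset.sum_comm,
    ← Finset.sum_neg_distrib]
  refine Finset.sum_congr rfl fun s _ => ?_
  rw [det_bordered, neg_neg]
  exact Finset.sum_sum_dite_mem_mul s (fun p q => adjugate _ q p) u v

theorem borderedDet_eq_det_bordered (f : Cspace n → ℝ) (s : Finset (Fin (n + 1)))
    (z : Cspace n) :
    borderedDet f s z = (bordered ((hess f z).submatrix (Subtype.val : s → _) Subtype.val)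
      (fun p => pder f p z) fun q => starRingEnd ℂ (pder f q z)).det := by
  unfold borderedDet
  congr 1
  ext (_ | _) (_ | _) <;> rfl

end PrincipalMinors

theorem stmt6_general (n j : ℕ)
    (f : Cspace n → ℝ) (z : Cspace n) :
    ∑ l, ∑ k, esymmDeriv (j + 1) l k (hess f z) * pder f l z * starRingEnd ℂ (pder f k z) =
      -∑ s ∈ Finset.univ.powersetCard (j + 1), borderedDet f s z := by
  simp only [borderedDet_eq_det_bordered]
  exact sum_esymmDeriv_mul_mul (j + 1) (hess f z) (pder f · z) (starRingEnd ℂ <| pder f · z)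

/-- **Lemma 2.1**: for every `C²` function `f : ℂ^{n+1} → ℝ` and every `j = 1, …, n`,
`Σ_{ℓ,k} (∂σ_{j+1}/∂a_{ℓk̄})(∂∂̄f) f_ℓ f_{k̄} = − Σ_{i_1<…<i_{j+1}} Δ_{(i_1,…,i_{j+1})}(f)`. -/
theorem stmt6 (n j : ℕ) (hj1 : 1 ≤ j) (hjn : j ≤ n)
    (f : Cspace n → ℝ) (hf : ContDiff ℝ 2 f) (z : Cspace n) :
    ∑ l, ∑ k, esymmDeriv (j + 1) l k (hess f z) * pder f l z * starRingEnd ℂ (pder f k z) =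
      -∑ s ∈ Finset.univ.powersetCard (j + 1), borderedDet f s z :=
  stmt6_general n j f z

end
end

section
/- The elementary symmetric functions of the complex Hessian are null Lagrangians: for every function f : ℂ^{n+1} → ℝ of class C³, every j = 1,…,n, and every k = 1,…,n+1, one has Σ_{ℓ=1}^{n+1} ∂_ℓ [ (∂σ_{j+1}/∂a_{ℓk̄})(∂∂̄f) ] = 0, where ∂_ℓ = ∂/∂z_ℓ. -/
open MeasureTheory Finset Complex ENNReal

noncomputable section

/-!
Only the principal minors `A_s` with `ℓ, k ∈ s` depend on `a_{ℓk̄}`, and the derivative of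
`det A_s` in that entry is the `(ℓ, k)` cofactor of `A_s`. So it suffices to prove, for each
principal submatrix `H` of `∂∂̄f`, the Piola identity `Σ_ℓ ∂_ℓ cof(H)_{ℓk} = 0`. The `p`-th
row of `∂∂̄f` is `∂_p` of the vector `(f_{q̄})_q`, hence `∂_ℓ H_{pq} = ∂_p H_{ℓq}`.
Differentiating the cofactor (a determinant with row `ℓ` replaced by `e_k`) row by row gives
terms indexed by pairs `ℓ ≠ p`; the terms for `(ℓ, p)` and `(p, ℓ)` are the same determinant
with two rows exchanged, so they cancel.
-/

open Matrix

theorem Fintype.sum_sum_eq_zero_of_antisymm {ι M : Type*} [Fintype ι] [AddCommGroup M]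
    (T : ι → ι → M) (hT : ∀ i j, i ≠ j → T j i = -T i j) (hdiag : ∀ i, T i i = 0) :
    ∑ i, ∑ j, T i j = 0 := by
  rw [← sum_product' (s := univ) (t := univ) (f := T)]
  refine sum_ninvolution Prod.swap (fun x => ?_) (fun x hx => ?_) (fun x => by simp)
    (fun x => by simp)
  · obtain ⟨i, j⟩ := x
    rcases eq_or_ne i j with rfl | hij
    · simp [hdiag]
    · simp [hT i j hij]
  · obtain ⟨i, j⟩ := x
    intro h
    obtain rfl : j = i := (Prod.ext_iff.1 h).1
    exact hx (hdiag j)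

section Algebra
variable {R ι : Type*} [CommRing R] [DecidableEq ι]

theorem Matrix.det_add_smul_single_s7 [Fintype ι] (A : Matrix ι ι R) (i j : ι) (t : R) :
    (A + t • single i j 1).det = A.det + t * adjugate A j i := by
  have : A + t • single i j 1 = A.updateRow i (A i + t • Pi.single j 1) := by
    ext p q
    by_cases hp : p = i
    · subst hp
      rcases eq_or_ne q j with rfl | hq
      · simp
      · simp [hq, Ne.symm hq]
    · simp [hp, Ne.symm hp]
  rw [this, det_updateRow_add, det_updateRow_smul, updateRow_eq_self, adjugate_apply]

theorem Matrix.det_updateRow_updateRow_swap [Fintype ι] (M : Matrix ι ι R) {a b : ι}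
    (hab : a ≠ b) (u v : ι → R) :
    ((M.updateRow a u).updateRow b v).det = -((M.updateRow a v).updateRow b u).det := by
  have : (M.updateRow a u).updateRow b v
      = ((M.updateRow a v).updateRow b u).submatrix (Equiv.swap a b) id := by
    ext p q
    rcases eq_or_ne p a with rfl | hpa
    · simp [updateRow_apply, hab, Equiv.swap_apply_left]
    rcases eq_or_ne p b with rfl | hpb
    · simp [updateRow_apply, hab, Equiv.swap_apply_right]
    · simp [updateRow_apply, Equiv.swap_apply_of_ne_of_ne hpa hpb, hpa, hpb]
  rw [this, det_permute, Equiv.Perm.sign_swap hab]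
  simp

/-- `∂ det(A_s) / ∂a_{lk}`, where `A_s` is the principal submatrix of `A` on the rows and
columns in `s`. -/
def principalCofactor (s : Finset ι) (A : Matrix ι ι R) (l k : ι) : R :=
  if h : l ∈ s ∧ k ∈ s then adjugate (A.submatrix ((↑) : s → ι) (↑)) ⟨k, h.2⟩ ⟨l, h.1⟩ else 0

theorem det_submatrix_add_smul_single (A : Matrix ι ι R) (s : Finset ι) (l k : ι) (t : R) :
    ((A + t • single l k 1).submatrix ((↑) : s → ι) ((↑) : s → ι)).det =
      (A.submatrix ((↑) : s → ι) ((↑) : s → ι)).det + t * principalCofactor s A l k := by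
  unfold principalCofactor
  split_ifs with h
  · rw [← det_add_smul_single_s7]
    congr 1
    ext p q
    simp [single_apply, Subtype.ext_iff]
  · rw [mul_zero, add_zero]
    congr 1
    ext p q
    have : ¬(l = p ∧ k = q) := fun hlk => h ⟨hlk.1 ▸ p.2, hlk.2 ▸ q.2⟩
    simp [this]

end Algebra

theorem esymmDeriv_eq_sum_principalCofactor {n : ℕ} (m : ℕ) (l k : Fin (n + 1))
    (A : Matrix (Fin (n + 1)) (Fin (n + 1)) ℂ) :
    esymmDeriv m l k A = ∑ s ∈ univ.powersetCard m, principalCofactor s A l k := by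
  have : (fun t : ℂ => esymm m (A + t • single l k 1)) =
      fun t => esymm m A + t * ∑ s ∈ univ.powersetCard m, principalCofactor s A l k := by
    ext t
    simp only [esymm, mul_sum, ← sum_add_distrib]
    exact sum_congr rfl fun s _ => det_submatrix_add_smul_single A s l k t
  rw [esymmDeriv, this]
  simp

section DetDeriv
variable {𝕜 𝔸 E ι : Type*} [NontriviallyNormedField 𝕜] [NormedCommRing 𝔸] [NormedAlgebra 𝕜 𝔸]
  [NormedAddCommGroup E] [NormedSpace 𝕜 E] [DecidableEq ι] {N : E → Matrix ι ι 𝔸} {z : E}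

theorem exists_hasFDerivAt_det [Fintype ι]
    (hN : ∀ i j, DifferentiableAt 𝕜 (fun w => N w i j) z) :
    ∃ D : E →L[𝕜] 𝔸, HasFDerivAt (fun w => (N w).det) D z ∧
      ∀ u, D u = ∑ i, ((N z).updateRow i fun j => fderiv 𝕜 (fun w => N w i j) z u).det := by
  let detRows : ContinuousMultilinearMap 𝕜 (fun _ : ι => ι → 𝔸) 𝔸 :=
    { toMultilinearMap :=
        (detRowAlternating : (ι → 𝔸) [⋀^ι]→ₗ[𝔸] 𝔸).toMultilinearMap.restrictScalars 𝕜
      cont := continuous_id.matrix_det }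
  have hrow : ∀ i, HasFDerivAt (fun w => N w i)
      (ContinuousLinearMap.pi fun j => fderiv 𝕜 (fun w => N w i j) z) z :=
    fun i => hasFDerivAt_pi.2 fun j => (hN i j).hasFDerivAt
  refine ⟨_, HasFDerivAt.multilinear_comp detRows hrow, fun u => ?_⟩
  simp only [FunLike.coe_sum, Finset.sum_apply, ContinuousLinearMap.comp_apply]
  rfl

theorem DifferentiableAt.matrix_det [Fintype ι]
    (hN : ∀ i j, DifferentiableAt 𝕜 (fun w => N w i j) z) :
    DifferentiableAt 𝕜 (fun w => (N w).det) z :=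
  let ⟨_, hD, _⟩ := exists_hasFDerivAt_det hN
  hD.differentiableAt

theorem fderiv_det_apply [Fintype ι] (hN : ∀ i j, DifferentiableAt 𝕜 (fun w => N w i j) z)
    (u : E) :
    fderiv 𝕜 (fun w => (N w).det) z u =
      ∑ i, ((N z).updateRow i fun j => fderiv 𝕜 (fun w => N w i j) z u).det := by
  obtain ⟨D, hD, hDu⟩ := exists_hasFDerivAt_det hN
  rw [hD.fderiv, hDu]

theorem differentiableAt_updateRow_apply (hN : ∀ i j, DifferentiableAt 𝕜 (fun w => N w i j) z)
    (l : ι) (v : ι → 𝔸) (i j : ι) : DifferentiableAt 𝕜 (fun w => (N w).updateRow l v i j) z := by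
  simp only [updateRow_apply]
  split_ifs
  exacts [differentiableAt_const _, hN i j]

theorem differentiableAt_adjugate_apply [Fintype ι]
    (hN : ∀ i j, DifferentiableAt 𝕜 (fun w => N w i j) z) (i j : ι) :
    DifferentiableAt 𝕜 (fun w => adjugate (N w) i j) z := by
  simp only [adjugate_apply]
  exact DifferentiableAt.matrix_det (differentiableAt_updateRow_apply hN _ _)

end DetDeriv

section Wirtinger
variable {n : ℕ} {z : Cspace n}

theorem zder_const (c : ℂ) (l : Fin (n + 1)) : zder (fun _ => c) l z = 0 := by
  simp [zder]

theorem zder_finset_sum {α : Type*} (S : Finset α) {F : α → Cspace n → ℂ}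
    (hF : ∀ a ∈ S, DifferentiableAt ℝ (F a) z) (l : Fin (n + 1)) :
    zder (fun w => ∑ a ∈ S, F a w) l z = ∑ a ∈ S, zder (F a) l z := by
  simp only [zder, fderiv_fun_sum hF, FunLike.coe_sum, Finset.sum_apply, mul_sum,
    ← sum_sub_distrib, sum_div]

theorem zder_det {ι : Type*} [Fintype ι] [DecidableEq ι] {N : Cspace n → Matrix ι ι ℂ}
    (hN : ∀ i j, DifferentiableAt ℝ (fun w => N w i j) z) (l : Fin (n + 1)) :
    zder (fun w => (N w).det) l z =
      ∑ i, ((N z).updateRow i fun j => zder (fun w => N w i j) l z).det := by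
  simp only [zder, fderiv_det_apply hN, mul_sum, ← sum_sub_distrib, sum_div]
  refine sum_congr rfl fun i _ => ?_
  set a := fun j => fderiv ℝ (fun w => N w i j) z (EuclideanSpace.single l 1)
  set b := fun j => fderiv ℝ (fun w => N w i j) z (EuclideanSpace.single l I)
  have : (fun j => (a j - I * b j) / 2) = (2 : ℂ)⁻¹ • (a + (-I) • b) := by
    ext j; simp only [Pi.smul_apply, Pi.add_apply, smul_eq_mul]; ring
  rw [this, det_updateRow_smul, det_updateRow_add, det_updateRow_smul]
  ring

theorem ContDiff.zder {m : WithTop ℕ∞} {g : Cspace n → ℂ} (hg : ContDiff ℝ (m + 1) g)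
    (l : Fin (n + 1)) : ContDiff ℝ m (zder g l) := by
  have hD := hg.fderiv_right le_rfl
  exact ((hD.clm_apply contDiff_const).sub
    (contDiff_const.mul (hD.clm_apply contDiff_const))).div_const 2

theorem ContDiff.zbar {m : WithTop ℕ∞} {g : Cspace n → ℂ} (hg : ContDiff ℝ (m + 1) g)
    (l : Fin (n + 1)) : ContDiff ℝ m (zbar g l) := by
  have hD := hg.fderiv_right le_rfl
  exact ((hD.clm_apply contDiff_const).add
    (contDiff_const.mul (hD.clm_apply contDiff_const))).div_const 2

theorem zder_zder_comm {g : Cspace n → ℂ} (hg : ContDiff ℝ 2 g) (p l : Fin (n + 1)) :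
    zder (zder g p) l z = zder (zder g l) p z := by
  have hD : Differentiable ℝ (fderiv ℝ g) :=
    (hg.fderiv_right (m := 1) (by norm_num)).differentiable one_ne_zero
  set D2 := fderiv ℝ (fderiv ℝ g) z
  have hsymm : ∀ u v, D2 u v = D2 v u := hg.contDiffAt.isSymmSndFDerivAt (x := z) (by simp)
  have happly : ∀ v, HasFDerivAt (fun w => fderiv ℝ g w v) (D2.flip v) z := fun v => by
    simpa using (hD z).hasFDerivAt.clm_apply (hasFDerivAt_const v z)
  have hzder : ∀ p u, fderiv ℝ (zder g p) z u =
      (D2 u (EuclideanSpace.single p 1) - I * D2 u (EuclideanSpace.single p I)) / 2 := by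
    intro p u
    have : zder g p = fun w => (fderiv ℝ g w (EuclideanSpace.single p 1) -
        I * fderiv ℝ g w (EuclideanSpace.single p I)) * 2⁻¹ :=
      funext fun w => div_eq_mul_inv _ _
    rw [this, (((happly _).fun_sub ((happly _).const_mul I)).mul_const _).fderiv]
    simp [div_eq_mul_inv, mul_comm]
  simp only [zder, hzder, hsymm (EuclideanSpace.single l _)]
  ring

end Wirtinger

section Piola
variable {n : ℕ} {z : Cspace n}

theorem sum_zder_adjugate_eq_zero {ι : Type*} [Fintype ι] [DecidableEq ι]
    {N : Cspace n → Matrix ι ι ℂ} (ν : ι → Fin (n + 1))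
    (hN : ∀ i j, DifferentiableAt ℝ (fun w => N w i j) z)
    (hsymm : ∀ l i j, zder (fun w => N w i j) (ν l) z = zder (fun w => N w l j) (ν i) z)
    (k : ι) :
    ∑ l, zder (fun w => adjugate (N w) k l) (ν l) z = 0 := by
  set δ : ι → ℂ := Pi.single k 1
  have hrow : ∀ l i, (fun j => zder (fun w => (N w).updateRow l δ i j) (ν l) z) =
      if i = l then 0 else fun j => zder (fun w => N w i j) (ν l) z := by
    intro l i
    split_ifs with h
    · subst h; ext j; simp [zder_const]
    · ext j; simp [updateRow_ne h]
  have hterm : ∀ l, zder (fun w => adjugate (N w) k l) (ν l) z = ∑ i,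
      (((N z).updateRow l δ).updateRow i
        (if i = l then 0 else fun j => zder (fun w => N w i j) (ν l) z)).det := fun l => by
    simp only [adjugate_apply]
    rw [zder_det (differentiableAt_updateRow_apply hN l δ)]
    simp only [hrow]
  rw [sum_congr rfl fun l _ => hterm l]
  -- exchanging rows `l` and `i` flips the sign, while `hsymm` makes the two entries agree
  refine Fintype.sum_sum_eq_zero_of_antisymm _ (fun l i hli => ?_) (fun l => ?_)
  · simp only [if_neg hli, if_neg hli.symm]
    rw [det_updateRow_updateRow_swap _ hli.symm, updateRow_comm _ hli]
    congr 4
    ext j; exact (hsymm l i j).symm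
  · simp only [if_true, updateRow_idem]
    exact det_eq_zero_of_row_eq_zero l fun j => by simp

theorem sum_zder_esymmDeriv_eq_zero {N : Cspace n → Matrix (Fin (n + 1)) (Fin (n + 1)) ℂ}
    (hN : ∀ i j, DifferentiableAt ℝ (fun w => N w i j) z)
    (hsymm : ∀ l i j, zder (fun w => N w i j) l z = zder (fun w => N w l j) i z)
    (m : ℕ) (k : Fin (n + 1)) :
    ∑ l, zder (fun w => esymmDeriv m l k (N w)) l z = 0 := by
  have hdiff : ∀ l s, DifferentiableAt ℝ (fun w => principalCofactor s (N w) l k) z := by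
    intro l s
    unfold principalCofactor
    by_cases h : l ∈ s ∧ k ∈ s
    · simp only [dif_pos h]
      exact differentiableAt_adjugate_apply
        (N := fun w => (N w).submatrix Subtype.val Subtype.val) (fun i j => hN i j) _ _
    · simp only [dif_neg h]
      exact differentiableAt_const _
  simp only [esymmDeriv_eq_sum_principalCofactor]
  rw [sum_congr rfl fun l _ => zder_finset_sum _ (fun s _ => hdiff l s) l, sum_comm]
  refine sum_eq_zero fun s _ => ?_
  by_cases hk : k ∈ s
  · rw [← sum_subset (subset_univ s) fun l _ hl => by simp [principalCofactor, hl, zder_const],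
      ← sum_coe_sort s]
    convert sum_zder_adjugate_eq_zero (N := fun w => (N w).submatrix Subtype.val Subtype.val)
      Subtype.val (fun i j => hN i j) (fun l i j => hsymm l i j) ⟨k, hk⟩ using 2 with l
    simp [principalCofactor, l.2, hk]
  · simp [principalCofactor, hk, zder_const]

end Piola

section Hessian
variable {n : ℕ} {f : Cspace n → ℝ} {z : Cspace n}

theorem contDiff_zbar_ofReal (hf : ContDiff ℝ 3 f) (q : Fin (n + 1)) :
    ContDiff ℝ 2 (zbar (fun u => (f u : ℂ)) q) :=
  (ofRealCLM.contDiff.comp hf).zbar (m := 2) q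

theorem differentiableAt_hess_apply (hf : ContDiff ℝ 3 f) (p q : Fin (n + 1)) :
    DifferentiableAt ℝ (fun w => hess f w p q) z :=
  ((contDiff_zbar_ofReal hf q).zder (m := 1) p).differentiable one_ne_zero z

theorem zder_hess_apply_comm (hf : ContDiff ℝ 3 f) (l p q : Fin (n + 1)) :
    zder (fun w => hess f w p q) l z = zder (fun w => hess f w l q) p z :=
  zder_zder_comm (contDiff_zbar_ofReal hf q) p l

end Hessian

theorem stmt7_general (n j : ℕ)
    (f : Cspace n → ℝ) (hf : ContDiff ℝ 3 f) (k : Fin (n + 1)) (z : Cspace n) :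
    ∑ l, zder (fun w => esymmDeriv (j + 1) l k (hess f w)) l z = 0 :=
  sum_zder_esymmDeriv_eq_zero (differentiableAt_hess_apply hf) (zder_hess_apply_comm hf) _ k

/-- **Null Lagrangian property** (formula (2.2)): for every `C³` function
`f : ℂ^{n+1} → ℝ`, `Σ_ℓ ∂_ℓ [(∂σ_{j+1}/∂a_{ℓk̄})(∂∂̄f)] = 0` for every `k`. -/
theorem stmt7 (n j : ℕ) (hj1 : 1 ≤ j) (hjn : j ≤ n)
    (f : Cspace n → ℝ) (hf : ContDiff ℝ 3 f) (k : Fin (n + 1)) (z : Cspace n) :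
    ∑ l, zder (fun w => esymmDeriv (j + 1) l k (hess f w)) l z = 0 :=
  stmt7_general n j f hf k z

end
end

section
/- Maclaurin–Newton inequality for Hermitian matrices: for every (n+1)×(n+1) positive semidefinite Hermitian matrix A and every j = 2,…,n+1, one has σ_j(A) ≤ C(n+1, j) · (trace(A)/(n+1))^j, and equality holds if and only if A is a scalar multiple of the identity matrix. -/
open MeasureTheory Finset Complex ENNReal

noncomputable section

/-!
Let `s` be the multiset of eigenvalues: `σ_j(A)` is its `j`-th elementary symmetric function `e_j`
(Vieta for the characteristic polynomial) and `trace A` is its sum. Maclaurin's inequality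
`e_{k+1}(s) ≤ C(#s, k+1) μ^{k+1}`, `μ` the mean of `s`, goes by induction on `s`:
`e_{k+1}(a ::ₘ s) = e_{k+1}(s) + a e_k(s)` is at most `C(m, k+1) μ^{k+1} + a C(m, k) μ^k`
(`m = #s`), which is `C(m+1, k+1)` times the tangent line of `t ↦ t^{k+1}` at `μ`, evaluated at the
new mean `μ + (a - μ)/(m+1)`. Convexity (Bernoulli's inequality) bounds it by `C(m+1, k+1)` times
the `(k+1)`-st power of the new mean, strictly if `a ≠ μ` and `k ≥ 1`. Peeling off an `a` that
differs from the mean, possible unless all eigenvalues coincide, i.e. unless `A` is scalar, gives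
the equality case.
-/

lemma pow_add_mul_lt_add_pow {a b : ℝ} (ha : 0 ≤ a) (hab : 0 ≤ a + b) (hb : b ≠ 0) {n : ℕ}
    (hn : 2 ≤ n) : a ^ n + n * a ^ (n - 1) * b < (a + b) ^ n := by
  rcases ha.eq_or_lt with rfl | ha
  · have hb : 0 < b := lt_of_le_of_ne (by simpa using hab) (Ne.symm hb)
    simpa [zero_pow (by omega : n ≠ 0), zero_pow (by omega : n - 1 ≠ 0)] using pow_pos hb n
  · have hbern := one_add_mul_self_lt_rpow_one_add (s := b / a)
      (by rw [le_div_iff₀ ha]; linarith) (div_ne_zero hb ha.ne') (p := n) (by exact_mod_cast hn)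
    rw [Real.rpow_natCast] at hbern
    have hpow : a ^ n = a ^ (n - 1) * a := by rw [← pow_succ]; congr 1; omega
    calc a ^ n + n * a ^ (n - 1) * b = a ^ n * (1 + n * (b / a)) := by
          rw [hpow]; field_simp
      _ < a ^ n * (1 + b / a) ^ n := by gcongr
      _ = (a + b) ^ n := by rw [← mul_pow]; congr 1; field_simp

lemma choose_succ_mul_tangent_eq (m k : ℕ) (a d : ℝ) :
    ((m + 1).choose (k + 1) : ℝ) * (a ^ (k + 1) + (k + 1 : ℕ) * a ^ k * ((d - a) / (m + 1))) =
      m.choose (k + 1) * a ^ (k + 1) + d * (m.choose k * a ^ k) := by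
  have h1 : ((m + 1).choose (k + 1) : ℝ) * (k + 1 : ℕ) = (m + 1) * m.choose k := by
    exact_mod_cast (Nat.add_one_mul_choose_eq m k).symm
  have h2 : ((m + 1).choose (k + 1) : ℝ) = m.choose k + m.choose (k + 1) := by
    exact_mod_cast Nat.choose_succ_succ m k
  calc _ = ((m + 1).choose (k + 1) : ℝ) * a ^ (k + 1)
        + ((m + 1).choose (k + 1) : ℝ) * (k + 1 : ℕ) * a ^ k * ((d - a) / (m + 1)) := by ring
    _ = _ := by rw [h1, h2]; field_simp; ring

lemma mul_add_div_add_one (m : ℕ) (a d : ℝ) :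
    ((m : ℝ) * a + d) / (m + 1) = a + (d - a) / (m + 1) := by
  field_simp; ring

lemma choose_mul_pow_add_le (m k : ℕ) {a d : ℝ} (ha : 0 ≤ a) (hd : 0 ≤ d) :
    m.choose (k + 1) * a ^ (k + 1) + d * (m.choose k * a ^ k) ≤
      (m + 1).choose (k + 1) * ((m * a + d) / (m + 1)) ^ (k + 1) := by
  rw [← choose_succ_mul_tangent_eq, mul_add_div_add_one]
  have hmean : 0 ≤ a + (d - a) / (m + 1) := by rw [← mul_add_div_add_one]; positivity
  have hbern := pow_add_mul_le_add_pow ha (b := (d - a) / (m + 1)) (by linarith) (k + 1)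
  simp only [Nat.add_sub_cancel] at hbern
  gcongr

lemma choose_mul_pow_add_lt (m : ℕ) {k : ℕ} (hk : 1 ≤ k) (hkm : k ≤ m) {a d : ℝ} (ha : 0 ≤ a)
    (hd : 0 ≤ d) (hda : d ≠ a) :
    m.choose (k + 1) * a ^ (k + 1) + d * (m.choose k * a ^ k) <
      (m + 1).choose (k + 1) * ((m * a + d) / (m + 1)) ^ (k + 1) := by
  rw [← choose_succ_mul_tangent_eq, mul_add_div_add_one]
  have hmean : 0 ≤ a + (d - a) / (m + 1) := by rw [← mul_add_div_add_one]; positivity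
  have hbern := pow_add_mul_lt_add_pow ha hmean
    (div_ne_zero (sub_ne_zero.mpr hda) (by positivity)) (n := k + 1) (by omega)
  simp only [Nat.add_sub_cancel] at hbern
  have hchoose : (0 : ℝ) < (m + 1).choose (k + 1) := by exact_mod_cast Nat.choose_pos (by omega)
  gcongr

namespace Multiset

variable {R : Type*} [CommSemiring R]

@[simp] lemma esymm_zero_right (s : Multiset R) : s.esymm 0 = 1 := by
  simp [esymm]

@[simp] lemma esymm_zero_left_succ (k : ℕ) : (0 : Multiset R).esymm (k + 1) = 0 := by
  simp [esymm, powersetCard_zero_right]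

lemma esymm_cons_succ (a : R) (s : Multiset R) (k : ℕ) :
    (a ::ₘ s).esymm (k + 1) = s.esymm (k + 1) + a * s.esymm k := by
  simp [esymm, map_map, sum_map_mul_left]

lemma esymm_replicate (n k : ℕ) (c : R) : (replicate n c).esymm k = n.choose k * c ^ k := by
  induction n generalizing k with
  | zero => cases k <;> simp
  | succ n ih =>
    cases k with
    | zero => simp
    | succ k =>
      rw [replicate_succ, esymm_cons_succ, ih, ih, Nat.choose_succ_succ']
      push_cast; ring

lemma card_mul_sum_div_card (s : Multiset ℝ) : (card s : ℝ) * (s.sum / card s) = s.sum := by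
  rcases eq_or_ne s 0 with rfl | hs
  · simp
  · exact mul_div_cancel₀ _ (by simpa using hs)

lemma sum_div_card_nonneg {s : Multiset ℝ} (hs : ∀ x ∈ s, 0 ≤ x) : 0 ≤ s.sum / card s :=
  div_nonneg (sum_nonneg hs) (Nat.cast_nonneg _)

lemma sum_div_card_cons (a : ℝ) (s : Multiset ℝ) :
    (a ::ₘ s).sum / card (a ::ₘ s) = (card s * (s.sum / card s) + a) / (card s + 1) := by
  rw [card_mul_sum_div_card, sum_cons, card_cons, add_comm a]
  push_cast; rfl

theorem esymm_le_choose_mul_pow_sum_div_card {s : Multiset ℝ} (hs : ∀ x ∈ s, 0 ≤ x) (k : ℕ) :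
    s.esymm k ≤ (card s).choose k * (s.sum / card s) ^ k := by
  induction s using Multiset.induction_on generalizing k with
  | empty => cases k <;> simp
  | cons a s ih =>
    cases k with
    | zero => simp
    | succ k =>
      have ha : 0 ≤ a := hs a (mem_cons_self a s)
      have hs : ∀ x ∈ s, 0 ≤ x := fun x hx => hs x (mem_cons_of_mem hx)
      calc (a ::ₘ s).esymm (k + 1) = s.esymm (k + 1) + a * s.esymm k := esymm_cons_succ a s k
        _ ≤ (card s).choose (k + 1) * (s.sum / card s) ^ (k + 1)
            + a * ((card s).choose k * (s.sum / card s) ^ k) := by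
          gcongr
          exacts [ih hs (k + 1), ih hs k]
        _ ≤ _ := by
          rw [sum_div_card_cons, card_cons]
          exact choose_mul_pow_add_le _ _ (sum_div_card_nonneg hs) ha

theorem esymm_lt_choose_mul_pow_sum_div_card {s : Multiset ℝ} (hs : ∀ x ∈ s, 0 ≤ x) {k : ℕ}
    (hk : 2 ≤ k) (hks : k ≤ card s) {a : ℝ} (ha : a ∈ s) (hne : a ≠ s.sum / card s) :
    s.esymm k < (card s).choose k * (s.sum / card s) ^ k := by
  obtain ⟨k, rfl⟩ : ∃ k', k = k' + 1 := ⟨k - 1, by omega⟩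
  obtain ⟨r, rfl⟩ : ∃ r, s = a ::ₘ r := ⟨s.erase a, (cons_erase ha).symm⟩
  have hr : ∀ x ∈ r, 0 ≤ x := fun x hx => hs x (mem_cons_of_mem hx)
  have hμ := sum_div_card_nonneg hr
  have hda : a ≠ r.sum / card r := by
    rintro rfl
    apply hne
    rw [sum_div_card_cons]
    field_simp
  rw [card_cons] at hks
  calc (a ::ₘ r).esymm (k + 1) = r.esymm (k + 1) + a * r.esymm k := esymm_cons_succ a r k
    _ ≤ (card r).choose (k + 1) * (r.sum / card r) ^ (k + 1)
        + a * ((card r).choose k * (r.sum / card r) ^ k) := by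
      have ha : 0 ≤ a := hs a ha
      gcongr
      exacts [esymm_le_choose_mul_pow_sum_div_card hr (k + 1),
        esymm_le_choose_mul_pow_sum_div_card hr k]
    _ < _ := by
      rw [sum_div_card_cons, card_cons]
      exact choose_mul_pow_add_lt _ (by omega) (by omega) hμ (hs a ha) hda

theorem esymm_eq_choose_mul_pow_sum_div_card_iff {s : Multiset ℝ} (hs : ∀ x ∈ s, 0 ≤ x) {k : ℕ}
    (hk : 2 ≤ k) (hks : k ≤ card s) :
    s.esymm k = (card s).choose k * (s.sum / card s) ^ k ↔ ∃ c, ∀ x ∈ s, x = c := by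
  constructor
  · intro heq
    refine ⟨s.sum / card s, fun a ha => ?_⟩
    by_contra hne
    exact (esymm_lt_choose_mul_pow_sum_div_card hs hk hks ha hne).ne heq
  · rintro ⟨c, hc⟩
    have hcard : (card s : ℝ) ≠ 0 := by exact_mod_cast (show card s ≠ 0 by omega)
    rw [eq_replicate_card.mpr hc, esymm_replicate, sum_replicate, card_replicate, nsmul_eq_mul,
      mul_div_cancel_left₀ _ hcard]

end Multiset

namespace Matrix.IsHermitian

variable {𝕜 n : Type*} [RCLike 𝕜] [Fintype n] [DecidableEq n] {A : Matrix n n 𝕜}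

open Polynomial in
lemma sum_det_submatrix_eq_esymm_eigenvalues (hA : A.IsHermitian) {k : ℕ}
    (hk : k ≤ Fintype.card n) :
    ∑ s ∈ univ.powersetCard k, (A.submatrix (Subtype.val : s → n) Subtype.val).det =
      ((univ.val.map hA.eigenvalues).esymm k : 𝕜) := by
  have hvieta := Multiset.prod_X_sub_C_coeff (univ.val.map fun i => (hA.eigenvalues i : 𝕜))
    (k := Fintype.card n - k) (by simp)
  simp only [Multiset.map_map, Function.comp_def, Multiset.card_map, card_val, card_univ,
    Nat.sub_sub_self hk] at hvieta
  have hcoeff := A.charpoly_coeff_eq_sum_minors k hk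
  rw [hA.charpoly_eq, prod_eq_multiset_prod, hvieta] at hcoeff
  rw [← mul_left_cancel₀ (pow_ne_zero k (neg_ne_zero.mpr one_ne_zero)) hcoeff,
    esymm_map_val, esymm_map_val]
  push_cast
  rfl

lemma eq_smul_one_iff_eigenvalues_eq (hA : A.IsHermitian) (c : ℝ) :
    A = (c : 𝕜) • 1 ↔ ∀ i, hA.eigenvalues i = c := by
  have hc : (c : 𝕜) • (1 : Matrix n n 𝕜) = algebraMap ℝ (Matrix n n 𝕜) c := by
    rw [Algebra.algebraMap_eq_smul_one, RCLike.real_smul_eq_coe_smul (K := 𝕜)]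
  constructor
  · intro h i
    have : Nonempty n := ⟨i⟩
    simpa [h, hc, spectrum.scalar_eq] using hA.eigenvalues_mem_spectrum_real i
  · intro h
    have hdiag : diagonal (RCLike.ofReal ∘ hA.eigenvalues) = (c : 𝕜) • (1 : Matrix n n 𝕜) := by
      rw [smul_one_eq_diagonal]; congr 1; funext i; simp [h i]
    rw [hA.spectral_theorem, hdiag, ← Algebra.algebraMap_eq_smul_one, AlgHomClass.commutes]

end Matrix.IsHermitian

open ComplexOrder in
/-- **Maclaurin–Newton inequality** (formula (3.2)): for every positive semidefinite
Hermitian `(n+1) × (n+1)` matrix `A` and every `j = 2, …, n+1`,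
`σ_j(A) ≤ C(n+1, j) (trace A / (n+1))^j`, with equality iff `A` is a scalar multiple
of the identity. -/
theorem stmt9 (n j : ℕ) (hj1 : 2 ≤ j) (hj2 : j ≤ n + 1)
    (A : Matrix (Fin (n + 1)) (Fin (n + 1)) ℂ) (hA : A.PosSemidef) :
    (esymm j A).re ≤ ((n + 1).choose j : ℝ) * ((A.trace).re / (n + 1)) ^ j ∧
      ((esymm j A).re = ((n + 1).choose j : ℝ) * ((A.trace).re / (n + 1)) ^ j ↔
        ∃ c : ℝ, A = (c : ℂ) • 1) := by
  set s := univ.val.map hA.1.eigenvalues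
  have hcard : Multiset.card s = n + 1 := by simp [s]
  have hnonneg : ∀ x ∈ s, 0 ≤ x :=
    Multiset.forall_mem_map_iff.mpr fun i _ => hA.eigenvalues_nonneg i
  have hesymm : (esymm j A).re = s.esymm j := by
    rw [esymm, ← RCLike.ofReal_re (K := ℂ) (s.esymm j),
      ← hA.1.sum_det_submatrix_eq_esymm_eigenvalues (by simpa using hj2)]
    rfl
  have htrace : A.trace.re = s.sum := by
    rw [sum_map_val, hA.1.trace_eq_sum_eigenvalues]
    simp only [Complex.coe_algebraMap, Complex.re_sum, Complex.ofReal_re]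
  have hscalar : (∃ c : ℝ, A = (c : ℂ) • 1) ↔ ∃ c, ∀ x ∈ s, x = c := by
    refine exists_congr fun c => (hA.1.eq_smul_one_iff_eigenvalues_eq c).trans ?_
    simp only [s, Multiset.forall_mem_map_iff, mem_val, mem_univ, true_imp_iff]
  have maclaurin := And.intro (Multiset.esymm_le_choose_mul_pow_sum_div_card hnonneg j)
    (Multiset.esymm_eq_choose_mul_pow_sum_div_card_iff hnonneg hj1 (hcard ▸ hj2))
  rw [hcard] at maclaurin
  push_cast at maclaurin
  rwa [hesymm, htrace, hscalar]

end
end
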